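/- Let X be a finite topological space, let ∼ be the equivalence relation x ∼ y iff Ψ(x,y) = Ψ(y,x) = 0 (equivalently U_x = U_y), and let X/∼ be the quotient space. Then Ψ_{X/∼}([x],[y]) = Ψ_X(x,y) for all x, y ∈ X. -/

import Mathlib

open Set Topology

/-- The minimal open set containing `x`: the intersection of all open sets containing `x`. -/
def minOpen (X : Type*) [TopologicalSpace X] (x : X) : Set X :=
  ⋂₀ {U : Set X | IsOpen U ∧ x ∈ U}

/-- A nested sequence of open sets around `x`: a sequence of open sets starting at the
minimal open set of `x`, increasing, strictly increasing until it reaches the whole space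
(after which it is stationary), with no open set strictly between consecutive terms. -/
def NestedSeq (X : Type*) [TopologicalSpace X] (x : X) (c : ℕ → Set X) : Prop :=
  c 0 = minOpen X x ∧ (∀ j, IsOpen (c j)) ∧
  (∀ j, c j ⊆ c (j + 1)) ∧
  (∀ j, c j ≠ c (j + 1) ∨ c j = Set.univ) ∧
  (∀ j, ∀ V : Set X, IsOpen V → c j ⊆ V → V ⊆ c (j + 1) → V = c j ∨ V = c (j + 1))

/-- The furtherness `Ψ(x,y)`: the least `k` such that `y` belongs to the `k`-th term of
some nested sequence of open sets around `x`. -/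
noncomputable def furth (X : Type*) [TopologicalSpace X] (x y : X) : ℕ :=
  sInf {k | ∃ c : ℕ → Set X, NestedSeq X x c ∧ y ∈ c k}

section Aux
variable {X : Type*} [TopologicalSpace X] [Finite X]

lemma isOpen_minOpen (x : X) : IsOpen (minOpen X x) :=
  Set.Finite.isOpen_sInter (Set.toFinite _) (fun _ h => h.1)

omit [Finite X] in
lemma mem_minOpen (x : X) : x ∈ minOpen X x :=
  fun _ h => h.2

omit [Finite X] in
lemma minOpen_subset {x : X} {U : Set X} (hU : IsOpen U) (hx : x ∈ U) :
    minOpen X x ⊆ U :=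
  Set.sInter_subset_of_mem ⟨hU, hx⟩

lemma minOpen_subset_of_mem {x y : X} (h : y ∈ minOpen X x) :
    minOpen X y ⊆ minOpen X x :=
  minOpen_subset (isOpen_minOpen x) h

lemma exists_minimal_open {U : Set X} (hne : U ≠ Set.univ) :
    ∃ V, (IsOpen V ∧ U ⊂ V) ∧ ∀ W, (IsOpen W ∧ U ⊂ W) → W ⊆ V → W = V := by
  obtain ⟨V, hV, hmin⟩ := (Set.toFinite {W : Set X | IsOpen W ∧ U ⊂ W}).exists_minimal
    ⟨Set.univ, isOpen_univ, hne.lt_top⟩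
  exact ⟨V, hV, fun W hW hWV => hWV.antisymm (hmin hW hWV)⟩

open Classical in
noncomputable def nxt (U : Set X) : Set X :=
  if h : U ≠ Set.univ then (exists_minimal_open h).choose else U

lemma subset_nxt (U : Set X) : U ⊆ nxt U := by
  classical
  unfold nxt
  split
  · exact (exists_minimal_open ‹_›).choose_spec.1.2.1.subset
  · exact subset_rfl

lemma isOpen_nxt {U : Set X} (hU : IsOpen U) : IsOpen (nxt U) := by
  classical
  unfold nxt
  split
  · exact (exists_minimal_open ‹_›).choose_spec.1.1
  · exact hU

lemma nxt_ne {U : Set X} (hne : U ≠ Set.univ) : U ≠ nxt U := by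
  classical
  unfold nxt
  rw [dif_pos hne]
  exact (exists_minimal_open hne).choose_spec.1.2.ne

lemma nxt_between {U V : Set X} (hV : IsOpen V) (h1 : U ⊆ V) (h2 : V ⊆ nxt U) :
    V = U ∨ V = nxt U := by
  by_cases hne : U ≠ Set.univ
  · rcases eq_or_ne V U with h | h
    · exact Or.inl h
    · refine Or.inr ?_
      classical
      have hn : nxt U = (exists_minimal_open hne).choose := by
        unfold nxt; rw [dif_pos hne]
      rw [hn] at h2 ⊢
      exact (exists_minimal_open hne).choose_spec.2 V ⟨hV, h1.ssubset_of_ne (Ne.symm h)⟩ h2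
  · push_neg at hne
    classical
    have hn : nxt U = U := by unfold nxt; rw [dif_neg (by simp [hne])]
    rw [hn] at h2
    exact Or.inl (h2.antisymm h1)

noncomputable def stdChain (x : X) : ℕ → Set X := fun k => nxt^[k] (minOpen X x)

lemma stdChain_nested (x : X) : NestedSeq X x (stdChain x) := by
  refine ⟨rfl, ?_, ?_, ?_, ?_⟩
  · intro j
    induction j with
    | zero => exact isOpen_minOpen x
    | succ n ih => rw [stdChain, Function.iterate_succ_apply']; exact isOpen_nxt ih
  · intro j
    simp only [stdChain, Function.iterate_succ_apply']
    exact subset_nxt _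
  · intro j
    by_cases h : stdChain x j = Set.univ
    · exact Or.inr h
    · refine Or.inl ?_
      simp only [stdChain, Function.iterate_succ_apply']
      exact nxt_ne h
  · intro j V hV h1 h2
    simp only [stdChain, Function.iterate_succ_apply'] at *
    exact nxt_between hV h1 h2

lemma stdChain_reaches (x : X) (y : X) : ∃ k, y ∈ stdChain x k := by
  by_contra hc
  push_neg at hc
  have hne : ∀ k, stdChain x k ≠ Set.univ := by
    intro k h
    exact hc k (h ▸ Set.mem_univ y)
  have hmono : StrictMono (stdChain x) := by
    refine strictMono_nat_of_lt_succ fun n => ?_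
    have h1 := (stdChain_nested x).2.2.1 n
    have h2 : stdChain x n ≠ stdChain x (n+1) := by
      simp only [stdChain, Function.iterate_succ_apply']
      exact nxt_ne (hne n)
    exact h1.ssubset_of_ne h2
  obtain ⟨i, j, hij, he⟩ := Finite.exists_ne_map_eq_of_infinite (stdChain x)
  exact hij (hmono.injective he)

lemma furth_eq_zero_iff (x y : X) : furth X x y = 0 ↔ y ∈ minOpen X x := by
  constructor
  · intro h
    rw [furth, Nat.sInf_eq_zero] at h
    rcases h with h | h
    · obtain ⟨c, hc, hy⟩ := h
      exact hc.1 ▸ hy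
    · exfalso
      obtain ⟨k, hk⟩ := stdChain_reaches x y
      exact Set.eq_empty_iff_forall_notMem.mp h k ⟨stdChain x, stdChain_nested x, hk⟩
  · intro h
    rw [furth, Nat.sInf_eq_zero]
    exact Or.inl ⟨stdChain x, stdChain_nested x, (stdChain_nested x).1.symm ▸ h⟩

/-- Main auxiliary lemma: furtherness is preserved under a saturated quotient map. -/
lemma furth_coinduced {Y : Type*} (f : X → Y) (hf : Function.Surjective f)
    (hsat : ∀ U : Set X, IsOpen U → f ⁻¹' (f '' U) = U) (x y : X) :
    @furth Y (TopologicalSpace.coinduced f ‹TopologicalSpace X›) (f x) (f y) = furth X x y := by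
  letI tY : TopologicalSpace Y := TopologicalSpace.coinduced f ‹TopologicalSpace X›
  -- preimage of the minimal open set
  have hmin : f ⁻¹' (minOpen Y (f x)) = minOpen X x := by
    apply Set.Subset.antisymm
    · have h1 : IsOpen (f '' (minOpen X x)) := by
        rw [isOpen_coinduced, hsat _ (isOpen_minOpen x)]
        exact isOpen_minOpen x
      have h2 : minOpen Y (f x) ⊆ f '' (minOpen X x) :=
        minOpen_subset h1 ⟨x, mem_minOpen x, rfl⟩
      calc f ⁻¹' (minOpen Y (f x)) ⊆ f ⁻¹' (f '' (minOpen X x)) := Set.preimage_mono h2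
        _ = minOpen X x := hsat _ (isOpen_minOpen x)
    · intro z hz
      simp only [Set.mem_preimage, minOpen, Set.mem_sInter]
      rintro W ⟨hW, hxW⟩
      have : minOpen X x ⊆ f ⁻¹' W := minOpen_subset (isOpen_coinduced.mp hW) hxW
      exact this hz
  have himg : f '' (minOpen X x) = minOpen Y (f x) := by
    rw [← hmin, Set.image_preimage_eq _ hf]
  have hset : {k | ∃ d : ℕ → Set Y, NestedSeq Y (f x) d ∧ f y ∈ d k}
      = {k | ∃ c : ℕ → Set X, NestedSeq X x c ∧ y ∈ c k} := by
    ext k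
    constructor
    · rintro ⟨d, ⟨hd0, hdop, hdmono, hdstr, hdbet⟩, hyk⟩
      refine ⟨fun j => f ⁻¹' d j, ⟨?_, ?_, ?_, ?_, ?_⟩, hyk⟩
      · show f ⁻¹' d 0 = minOpen X x
        rw [hd0, hmin]
      · exact fun j => isOpen_coinduced.mp (hdop j)
      · exact fun j => Set.preimage_mono (hdmono j)
      · intro j
        rcases hdstr j with h | h
        · refine Or.inl fun he => h ?_
          have he' : f ⁻¹' d j = f ⁻¹' d (j+1) := he
          rw [← Set.image_preimage_eq (d j) hf, ← Set.image_preimage_eq (d (j+1)) hf, he']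
        · exact Or.inr (show f ⁻¹' d j = Set.univ by rw [h, Set.preimage_univ])
      · intro j V hV h1 h2
        have hVsat : f ⁻¹' (f '' V) = V := hsat V hV
        have hW : IsOpen (f '' V) := by rw [isOpen_coinduced, hVsat]; exact hV
        have hb1 : d j ⊆ f '' V := by
          rw [← Set.image_preimage_eq (d j) hf]
          exact Set.image_mono h1
        have hb2 : f '' V ⊆ d (j+1) := by
          rw [← Set.image_preimage_eq (d (j+1)) hf]
          exact Set.image_mono h2
        rcases hdbet j (f '' V) hW hb1 hb2 with h | h
        · exact Or.inl (by rw [← hVsat, h])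
        · exact Or.inr (by rw [← hVsat, h])
    · rintro ⟨c, ⟨hc0, hcop, hcmono, hcstr, hcbet⟩, hyk⟩
      have hpre : ∀ j, f ⁻¹' (f '' c j) = c j := fun j => hsat _ (hcop j)
      refine ⟨fun j => f '' c j, ⟨?_, ?_, ?_, ?_, ?_⟩, Set.mem_image_of_mem f hyk⟩
      · show f '' c 0 = minOpen Y (f x)
        rw [hc0, himg]
      · intro j; rw [isOpen_coinduced, hpre]; exact hcop j
      · exact fun j => Set.image_mono (hcmono j)
      · intro j
        rcases hcstr j with h | h
        · refine Or.inl fun he => h ?_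
          have he' : f '' c j = f '' c (j+1) := he
          rw [← hpre j, ← hpre (j+1), he']
        · exact Or.inr (show f '' c j = Set.univ by rw [h, Set.image_univ, hf.range_eq])
      · intro j W hW h1 h2
        have h1' : c j ⊆ f ⁻¹' W := by
          rw [← hpre j]; exact Set.preimage_mono h1
        have h2' : f ⁻¹' W ⊆ c (j+1) := by
          rw [← hpre (j+1)]; exact Set.preimage_mono h2
        rcases hcbet j (f ⁻¹' W) (isOpen_coinduced.mp hW) h1' h2' with h | h
        · exact Or.inl (by rw [← Set.image_preimage_eq W hf, h])
        · exact Or.inr (by rw [← Set.image_preimage_eq W hf, h])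
  rw [furth, furth, hset]

end Aux

theorem stmt10 (X : Type*) [t : TopologicalSpace X] [Finite X]
    (r : X → X → Prop) (hr : ∀ a b : X, r a b ↔ (furth X a b = 0 ∧ furth X b a = 0))
    (x y : X) :
    @furth (Quot r) (TopologicalSpace.coinduced (Quot.mk r) t)
      (Quot.mk r x) (Quot.mk r y) = furth X x y := by
  have hrmin : ∀ a b : X, r a b → minOpen X a = minOpen X b := by
    intro a b hab
    rw [hr] at hab
    exact Set.Subset.antisymm
      (minOpen_subset_of_mem ((furth_eq_zero_iff b a).mp hab.2))
      (minOpen_subset_of_mem ((furth_eq_zero_iff a b).mp hab.1))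
  have heqv : ∀ a b : X, Relation.EqvGen r a b → minOpen X a = minOpen X b := by
    intro a b h
    induction h with
    | rel _ _ h => exact hrmin _ _ h
    | refl => rfl
    | symm _ _ _ ih => exact ih.symm
    | trans _ _ _ _ _ ih1 ih2 => exact ih1.trans ih2
  have hsat : ∀ U : Set X, IsOpen U → (Quot.mk r) ⁻¹' ((Quot.mk r) '' U) = U := by
    intro U hU
    apply Set.Subset.antisymm
    · rintro a ⟨b, hbU, hba⟩
      have := heqv b a (Quot.eq.mp hba)
      have hb : minOpen X b ⊆ U := minOpen_subset hU hbU
      exact hb (this ▸ mem_minOpen a)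
    · exact Set.subset_preimage_image _ _
  exact furth_coinduced (Quot.mk r) Quot.mk_surjective hsat x y
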